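/- arXiv:2105.11417 — 4 statements merged into one kernel-verified Lean document; each statement's English description precedes it below -/
import Mathlib

section
/- Let n, p, q be natural numbers and let L ∈ ℂ^{(2p+1)×(2q+1)} be a single-channel complex 2D convolution filter. Let J(L) = Σ_{i=-p}^{p} Σ_{j=-q}^{q} L_{p+i,q+j} · (P^(i) ⊗ P^(j)) be the Jacobian of the convolution on n×n inputs, and let conv_transpose(L) be the filter with [conv_transpose(L)]_{k,l} = conj(L_{2p-k,2q-l}). Then J(conv_transpose(L)) = (J(L))^H, the conjugate transpose of J(L). -/
open Matrix

open scoped Kronecker ComplexConjugate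

/-- The shift matrix `P^(k)`: the `n × n` matrix with `P^(k)_{i,j} = 1` if `i - j = k`
(as integers) and `0` otherwise. -/
noncomputable def shiftP (n : ℕ) (k : ℤ) : Matrix (Fin n) (Fin n) ℂ :=
  Matrix.of fun i j => if ((i : ℕ) : ℤ) - ((j : ℕ) : ℤ) = k then 1 else 0

/-- The Jacobian of the 2D convolution (zero padding, stride 1) with a single-channel complex
filter `L ∈ ℂ^{(2p+1)×(2q+1)}` on `n×n` inputs:
`J(L) = Σ_{i=-p}^{p} Σ_{j=-q}^{q} L_{p+i,q+j} • (P^(i) ⊗ P^(j))`. -/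
noncomputable def convJacobian (n p q : ℕ) (L : Fin (2 * p + 1) → Fin (2 * q + 1) → ℂ) :
    Matrix (Fin n × Fin n) (Fin n × Fin n) ℂ :=
  ∑ k : Fin (2 * p + 1), ∑ l : Fin (2 * q + 1),
    L k l • (shiftP n (((k : ℕ) : ℤ) - (p : ℤ)) ⊗ₖ shiftP n (((l : ℕ) : ℤ) - (q : ℤ)))

/-! Conjugate transposition turns the shift `P^(k)` into `P^(-k)` and distributes over the
Kronecker product, while reversing both filter indices sends the offsets `(k - p, l - q)` to
their negatives; so the two double sums agree term by term after reindexing by `Fin.rev`. -/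

theorem shiftP_conjTranspose (n : ℕ) (k : ℤ) : (shiftP n k)ᴴ = shiftP n (-k) := by
  ext i j
  have hswap : ((j : ℕ) : ℤ) - i = k ↔ ((i : ℕ) : ℤ) - j = -k := by omega
  simp [shiftP, conjTranspose_apply, apply_ite (star : ℂ → ℂ), hswap]

theorem Fin.val_rev_sub_eq_neg {p : ℕ} (k : Fin (2 * p + 1)) :
    ((k.rev : ℕ) : ℤ) - p = -(((k : ℕ) : ℤ) - p) := by
  have := Fin.val_rev k
  omega

/-- For a single-channel complex filter `L`, the Jacobian of the convolution with
`conv_transpose(L)_{k,l} = conj (L_{2p-k,2q-l})` equals the conjugate transpose of the Jacobian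
of the convolution with `L`. -/
theorem convJacobian_conv_transpose (n p q : ℕ)
    (L : Fin (2 * p + 1) → Fin (2 * q + 1) → ℂ) :
    convJacobian n p q (fun k l => conj (L k.rev l.rev)) = (convJacobian n p q L)ᴴ := by
  simp only [convJacobian, conjTranspose_sum, conjTranspose_smul, conjTranspose_kronecker,
    shiftP_conjTranspose]
  refine Fintype.sum_bijective Fin.rev Fin.rev_bijective _ _ fun k => ?_
  refine Fintype.sum_bijective Fin.rev Fin.rev_bijective _ _ fun l => ?_
  simp only [Fin.val_rev_sub_eq_neg, neg_neg]
  rfl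
end

section
/- Let A ∈ ℂ^{n×n} be a skew-Hermitian matrix (A^H = -A) and let k be a natural number. Then ‖exp(A) - S_k(A)‖₂ ≤ ‖A‖₂^k / k!, where S_k(A) = Σ_{i=0}^{k-1} A^i / i! (with S_0(A) = 0). -/
/-!
Put `R_k(t) = exp(tA) - S_k(tA)`. Then `R_0(t) = exp(tA)` and `R_{k+1}' = A R_k`, with
`R_{k+1}(0) = 0`. Since `A` is skew-Hermitian, every `exp(tA)` is unitary, hence of norm at most
`1`, and integrating the differential inequality `‖R_{k+1}'(t)‖ ≤ ‖A‖ ‖R_k(t)‖` by induction on `k`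
gives `‖R_k(t)‖ ≤ ‖A‖^k t^k / k!` for `t ≥ 0`; take `t = 1`.
-/

open Matrix

open scoped Matrix.Norms.L2Operator

open NormedSpace Finset Nat

section TaylorRemainder

variable {𝔸 : Type*} [NormedRing 𝔸] [NormedAlgebra ℝ 𝔸]

theorem hasDerivAt_inv_factorial_smul_smul_pow_succ (a : 𝔸) (i : ℕ) (t : ℝ) :
    HasDerivAt (fun s : ℝ => ((i + 1)! : ℝ)⁻¹ • (s • a) ^ (i + 1))
      (a * ((i ! : ℝ)⁻¹ • (t • a) ^ i)) t := by
  simp only [smul_pow]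
  refine (((hasDerivAt_pow (i + 1) t).smul_const (a ^ (i + 1))).const_smul
    ((i + 1)! : ℝ)⁻¹).congr_deriv ?_
  rw [pow_succ' a i, mul_smul_comm, mul_smul_comm, smul_smul, smul_smul, Nat.add_sub_cancel]
  congr 1
  push_cast [factorial_succ]
  field_simp

theorem hasDerivAt_sum_inv_factorial_smul_smul_pow (a : 𝔸) (k : ℕ) (t : ℝ) :
    HasDerivAt (fun s : ℝ => ∑ i ∈ range (k + 1), (i ! : ℝ)⁻¹ • (s • a) ^ i)
      (a * ∑ i ∈ range k, (i ! : ℝ)⁻¹ • (t • a) ^ i) t := by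
  simp only [sum_range_succ' _ k, pow_zero, mul_sum]
  exact (HasDerivAt.fun_sum fun i _ =>
    hasDerivAt_inv_factorial_smul_smul_pow_succ a i t).add_const _

variable [CompleteSpace 𝔸]

theorem hasDerivAt_exp_smul_sub_taylor (a : 𝔸) (k : ℕ) (t : ℝ) :
    HasDerivAt (fun s : ℝ => exp (s • a) - ∑ i ∈ range (k + 1), (i ! : ℝ)⁻¹ • (s • a) ^ i)
      (a * (exp (t • a) - ∑ i ∈ range k, (i ! : ℝ)⁻¹ • (t • a) ^ i)) t := by
  rw [mul_sub]
  exact (hasDerivAt_exp_smul_const' a t).sub (hasDerivAt_sum_inv_factorial_smul_smul_pow a k t)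

theorem norm_exp_smul_sub_taylor_le {a : 𝔸} {M : ℝ} (hM : ∀ s : ℝ, 0 ≤ s → ‖exp (s • a)‖ ≤ M)
    (k : ℕ) {t : ℝ} (ht : 0 ≤ t) :
    ‖exp (t • a) - ∑ i ∈ range k, (i ! : ℝ)⁻¹ • (t • a) ^ i‖ ≤ M * ‖a‖ ^ k / k ! * t ^ k := by
  induction k generalizing t with
  | zero => simpa using hM t ht
  | succ k ih =>
    set C := M * ‖a‖ ^ (k + 1) / (k + 1)!
    have hB (x : ℝ) : HasDerivAt (fun s => C * s ^ (k + 1)) (C * ((k + 1 : ℕ) * x ^ k)) x :=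
      (hasDerivAt_pow (k + 1) x).const_mul C
    have hf0 : ‖exp ((0 : ℝ) • a) - ∑ i ∈ range (k + 1), (i ! : ℝ)⁻¹ • ((0 : ℝ) • a) ^ i‖
        ≤ C * 0 ^ (k + 1) := by
      simp [sum_range_succ']
    refine image_norm_le_of_norm_deriv_right_le_deriv_boundary
      (fun x _ => (hasDerivAt_exp_smul_sub_taylor a k x).continuousAt.continuousWithinAt)
      (fun x _ => (hasDerivAt_exp_smul_sub_taylor a k x).hasDerivWithinAt) hf0 hB
      (fun x hx => ?_) ⟨ht, le_rfl⟩
    calc ‖a * (exp (x • a) - ∑ i ∈ range k, (i ! : ℝ)⁻¹ • (x • a) ^ i)‖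
        ≤ ‖a‖ * (M * ‖a‖ ^ k / k ! * x ^ k) :=
          (norm_mul_le _ _).trans (mul_le_mul_of_nonneg_left (ih hx.1) (norm_nonneg a))
      _ = C * ((k + 1 : ℕ) * x ^ k) := by
          simp only [C]
          push_cast [factorial_succ]
          field_simp
          ring

end TaylorRemainder

theorem CStarRing.norm_le_one_of_mem_unitary {E : Type*} [NormedRing E] [StarRing E] [CStarRing E]
    {U : E} (hU : U ∈ unitary E) : ‖U‖ ≤ 1 := by
  rcases subsingleton_or_nontrivial E with _ | _
  · simp [Subsingleton.elim U 0]
  · exact (CStarRing.norm_of_mem_unitary hU).le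

theorem norm_exp_le_one_of_mem_skewAdjoint {E : Type*} [NormedRing E] [NormedAlgebra ℚ E]
    [CompleteSpace E] [StarRing E] [CStarRing E] {a : E} (ha : a ∈ skewAdjoint E) :
    ‖exp a‖ ≤ 1 :=
  CStarRing.norm_le_one_of_mem_unitary (exp_mem_unitary_of_mem_skewAdjoint ha)

/-- For a complex skew-Hermitian matrix `A` (`Aᴴ = -A`), the spectral norm of the difference
between the matrix exponential `exp(A)` and its `k`-term Taylor approximation
`S_k(A) = Σ_{i=0}^{k-1} A^i / i!` is at most `‖A‖₂^k / k!`. -/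
theorem norm_exp_sub_taylor_le {n : ℕ} (A : Matrix (Fin n) (Fin n) ℂ)
    (hA : Aᴴ = -A) (k : ℕ) :
    ‖NormedSpace.exp A - ∑ i ∈ Finset.range k, ((Nat.factorial i : ℂ))⁻¹ • A ^ i‖ ≤
      ‖A‖ ^ k / (Nat.factorial k : ℝ) := by
  let : NormedAlgebra ℚ (Matrix (Fin n) (Fin n) ℂ) := .restrictScalars ℚ ℝ _
  have hskew : A ∈ skewAdjoint (Matrix (Fin n) (Fin n) ℂ) := skewAdjoint.mem_iff.mpr hA
  have hcontr (s : ℝ) (_ : 0 ≤ s) : ‖exp (s • A)‖ ≤ 1 :=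
    norm_exp_le_one_of_mem_skewAdjoint (skewAdjoint.smul_mem s hskew)
  have h := norm_exp_smul_sub_taylor_le hcontr k zero_le_one
  have hcoe (i : ℕ) : ((i ! : ℂ))⁻¹ • A ^ i = (i ! : ℝ)⁻¹ • A ^ i := by
    rw [← Complex.coe_smul]; push_cast; rfl
  simpa [hcoe] using h
end

section
/- Let n, p, q, r be natural numbers, m a positive natural number, and let L ∈ ℂ^{m×m×(2p+1)×(2q+1)×(2r+1)} be a complex 3D convolution filter. Let J(L) denote the Jacobian of the convolution with filter L on m-channel n×n×n inputs (defined explicitly in the context), and let conv3d_transpose(L) be the filter with [conv3d_transpose(L)]_{a,b,s,t,u} = conj(L_{b,a,2p-s,2q-t,2r-u}). Then J(conv3d_transpose(L)) = (J(L))^H, the conjugate transpose of J(L). -/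
open Matrix

open scoped Kronecker ComplexConjugate

/-- The Jacobian of the 3D convolution (zero padding, stride 1) with a complex filter
`L ∈ ℂ^{m×m×(2p+1)×(2q+1)×(2r+1)}` on `m`-channel `n×n×n` inputs: the block matrix whose `(a,b)`
block is `Σ_{i=-p}^{p} Σ_{j=-q}^{q} Σ_{k=-r}^{r} L_{a,b,p+i,q+j,r+k} • (P^(i) ⊗ P^(j) ⊗ P^(k))`. -/
noncomputable def conv3dJacobian (n p q r m : ℕ)
    (L : Fin m → Fin m → Fin (2 * p + 1) → Fin (2 * q + 1) → Fin (2 * r + 1) → ℂ) :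
    Matrix (Fin m × (Fin n × Fin n) × Fin n) (Fin m × (Fin n × Fin n) × Fin n) ℂ :=
  Matrix.of fun x y =>
    ∑ s : Fin (2 * p + 1), ∑ t : Fin (2 * q + 1), ∑ u : Fin (2 * r + 1),
      L x.1 y.1 s t u *
        ((shiftP n (((s : ℕ) : ℤ) - (p : ℤ)) ⊗ₖ shiftP n (((t : ℕ) : ℤ) - (q : ℤ))) ⊗ₖ
          shiftP n (((u : ℕ) : ℤ) - (r : ℤ))) x.2 y.2

theorem Fin.val_rev_sub_center {p : ℕ} (s : Fin (2 * p + 1)) :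
    ((s.rev : ℕ) : ℤ) - p = -(((s : ℕ) : ℤ) - p) := by
  have := s.isLt
  rw [Fin.val_rev]
  omega

theorem kronecker_shiftP_rev {n p q r : ℕ} (s : Fin (2 * p + 1)) (t : Fin (2 * q + 1))
    (u : Fin (2 * r + 1)) :
    (shiftP n (((s.rev : ℕ) : ℤ) - p) ⊗ₖ shiftP n (((t.rev : ℕ) : ℤ) - q)) ⊗ₖ
        shiftP n (((u.rev : ℕ) : ℤ) - r) =
      ((shiftP n (((s : ℕ) : ℤ) - p) ⊗ₖ shiftP n (((t : ℕ) : ℤ) - q)) ⊗ₖ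
        shiftP n (((u : ℕ) : ℤ) - r))ᴴ := by
  simp only [conjTranspose_kronecker, shiftP_conjTranspose, Fin.val_rev_sub_center]

theorem conv3dJacobian_conv_transpose_general (n p q r m : ℕ)
    (L : Fin m → Fin m → Fin (2 * p + 1) → Fin (2 * q + 1) → Fin (2 * r + 1) → ℂ) :
    conv3dJacobian n p q r m (fun a b s t u => conj (L b a s.rev t.rev u.rev)) =
      (conv3dJacobian n p q r m L)ᴴ := by
  ext x y
  simp only [conv3dJacobian, conjTranspose_apply, of_apply, star_sum, star_mul']
  refine Fintype.sum_equiv Fin.revPerm _ _ fun s => ?_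
  refine Fintype.sum_equiv Fin.revPerm _ _ fun t => ?_
  refine Fintype.sum_equiv Fin.revPerm _ _ fun u => ?_
  rw [Fin.revPerm_apply, Fin.revPerm_apply, Fin.revPerm_apply, kronecker_shiftP_rev,
    conjTranspose_apply, star_star, Complex.star_def]

/-- For a complex 3D filter `L`, the Jacobian of the convolution with
`conv3d_transpose(L)_{a,b,s,t,u} = conj (L_{b,a,2p-s,2q-t,2r-u})` equals the conjugate transpose
of the Jacobian of the convolution with `L`. -/
theorem conv3dJacobian_conv_transpose (n p q r m : ℕ) (hm : 0 < m)
    (L : Fin m → Fin m → Fin (2 * p + 1) → Fin (2 * q + 1) → Fin (2 * r + 1) → ℂ) :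
    conv3dJacobian n p q r m (fun a b s t u => conj (L b a s.rev t.rev u.rev)) =
      (conv3dJacobian n p q r m L)ᴴ :=
  conv3dJacobian_conv_transpose_general n p q r m L
end

section
/- Let n, p, q, r be natural numbers, m a positive natural number, and let L ∈ ℂ^{m×m×(2p+1)×(2q+1)×(2r+1)} be a complex 3D convolution filter, with Jacobian J(L) on m-channel n×n×n inputs (defined explicitly in the context). Assume n ≥ 2p+1, n ≥ 2q+1 and n ≥ 2r+1. Then J(L) is skew-Hermitian (J(L)^H = -J(L)) if and only if there exists a filter M ∈ ℂ^{m×m×(2p+1)×(2q+1)×(2r+1)} such that L = M - conv3d_transpose(M), where [conv3d_transpose(M)]_{a,b,s,t,u} = conj(M_{b,a,2p-s,2q-t,2r-u}). -/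
open Matrix

open scoped Kronecker ComplexConjugate

theorem AddMonoidHom.apply_eq_neg_iff_exists_sub_of_involutive {E : Type*} [AddCommGroup E]
    [Module ℚ E] (T : E →+ E) (hT : Function.Involutive T) (x : E) :
    T x = -x ↔ ∃ y, x = y - T y := by
  constructor
  · intro hx
    refine ⟨(2⁻¹ : ℚ) • x, ?_⟩
    rw [map_rat_smul, hx, smul_neg, sub_neg_eq_add, ← add_smul]
    norm_num
  · rintro ⟨y, rfl⟩
    rw [map_sub, hT y, neg_sub]

theorem star_shiftP_apply (n : ℕ) (k : ℤ) (i j : Fin n) :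
    star (shiftP n k j i) = shiftP n (-k) i j := by
  simp only [shiftP, of_apply]
  split_ifs <;> simp <;> omega

theorem Fin.cast_rev_sub_center (p : ℕ) (s : Fin (2 * p + 1)) :
    ((s.rev : ℕ) : ℤ) - p = -(((s : ℕ) : ℤ) - p) := by
  have := s.isLt
  rw [Fin.val_rev]
  omega

theorem shiftP_apply_castLE_center {n p : ℕ} (hp : 2 * p + 1 ≤ n) (s s' : Fin (2 * p + 1)) :
    shiftP n (((s : ℕ) : ℤ) - p) (Fin.castLE hp s') ⟨p, by omega⟩ =
      if s' = s then 1 else 0 := by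
  simp only [shiftP, of_apply, Fin.val_castLE, sub_left_inj, Nat.cast_inj, Fin.val_inj]

abbrev ConvFilter3d (p q r m : ℕ) : Type :=
  Fin m → Fin m → Fin (2 * p + 1) → Fin (2 * q + 1) → Fin (2 * r + 1) → ℂ

/-- The paper's `conv3d_transpose`. -/
def conv3dTranspose (p q r m : ℕ) : ConvFilter3d p q r m →+ ConvFilter3d p q r m where
  toFun M a b s t u := conj (M b a s.rev t.rev u.rev)
  map_zero' := by ext; simp
  map_add' _ _ := by ext; simp

theorem conv3dTranspose_involutive (p q r m : ℕ) :
    Function.Involutive (conv3dTranspose p q r m) := by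
  intro M
  ext
  simp [conv3dTranspose]

section Jacobian

variable (n : ℕ) {p q r m : ℕ}

theorem conv3dJacobian_neg (L : ConvFilter3d p q r m) :
    conv3dJacobian n p q r m (-L) = -conv3dJacobian n p q r m L := by
  ext x y
  simp [conv3dJacobian, Finset.sum_neg_distrib]

theorem conv3dJacobian_conjTranspose (L : ConvFilter3d p q r m) :
    (conv3dJacobian n p q r m L)ᴴ = conv3dJacobian n p q r m (conv3dTranspose p q r m L) := by
  ext ⟨a, ⟨x₁, x₂⟩, x₃⟩ ⟨b, ⟨y₁, y₂⟩, y₃⟩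
  simp only [conjTranspose_apply, conv3dJacobian, of_apply, kroneckerMap_apply, star_sum,
    star_mul', star_shiftP_apply]
  refine Fintype.sum_equiv Fin.revPerm _ _ fun s => ?_
  refine Fintype.sum_equiv Fin.revPerm _ _ fun t => ?_
  refine Fintype.sum_equiv Fin.revPerm _ _ fun u => ?_
  simp only [Fin.revPerm_apply, Fin.cast_rev_sub_center, conv3dTranspose, AddMonoidHom.coe_mk,
    ZeroHom.coe_mk, Fin.rev_rev, Complex.star_def]

theorem conv3dJacobian_apply_castLE_center (hp : 2 * p + 1 ≤ n) (hq : 2 * q + 1 ≤ n)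
    (hr : 2 * r + 1 ≤ n) (L : ConvFilter3d p q r m) (a b : Fin m) (s : Fin (2 * p + 1))
    (t : Fin (2 * q + 1)) (u : Fin (2 * r + 1)) :
    conv3dJacobian n p q r m L
        (a, (Fin.castLE hp s, Fin.castLE hq t), Fin.castLE hr u)
        (b, (⟨p, by omega⟩, ⟨q, by omega⟩), ⟨r, by omega⟩) =
      L a b s t u := by
  simp [conv3dJacobian, kroneckerMap_apply, shiftP_apply_castLE_center]

theorem conv3dJacobian_injective (hp : 2 * p + 1 ≤ n) (hq : 2 * q + 1 ≤ n)
    (hr : 2 * r + 1 ≤ n) : Function.Injective (conv3dJacobian n p q r m) := by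
  intro L L' h
  ext a b s t u
  rw [← conv3dJacobian_apply_castLE_center n hp hq hr L,
    ← conv3dJacobian_apply_castLE_center n hp hq hr L', h]

end Jacobian

theorem conv3dJacobian_skewHermitian_iff_general (n p q r m : ℕ)
    (hp : 2 * p + 1 ≤ n) (hq : 2 * q + 1 ≤ n) (hr : 2 * r + 1 ≤ n)
    (L : Fin m → Fin m → Fin (2 * p + 1) → Fin (2 * q + 1) → Fin (2 * r + 1) → ℂ) :
    (conv3dJacobian n p q r m L)ᴴ = -(conv3dJacobian n p q r m L) ↔
      ∃ M : Fin m → Fin m → Fin (2 * p + 1) → Fin (2 * q + 1) → Fin (2 * r + 1) → ℂ,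
        L = fun a b s t u => M a b s t u - conj (M b a s.rev t.rev u.rev) := by
  rw [conv3dJacobian_conjTranspose, ← conv3dJacobian_neg,
    (conv3dJacobian_injective n hp hq hr).eq_iff]
  exact (conv3dTranspose p q r m).apply_eq_neg_iff_exists_sub_of_involutive
    (conv3dTranspose_involutive p q r m) L

/-- If `n ≥ 2p+1`, `n ≥ 2q+1` and `n ≥ 2r+1`, the Jacobian of the 3D convolution with a complex
filter `L` is skew-Hermitian if and only if `L = M - conv3d_transpose(M)` for some filter `M`,
where `conv3d_transpose(M)_{a,b,s,t,u} = conj (M_{b,a,2p-s,2q-t,2r-u})`. -/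
theorem conv3dJacobian_skewHermitian_iff (n p q r m : ℕ) (hm : 0 < m)
    (hp : 2 * p + 1 ≤ n) (hq : 2 * q + 1 ≤ n) (hr : 2 * r + 1 ≤ n)
    (L : Fin m → Fin m → Fin (2 * p + 1) → Fin (2 * q + 1) → Fin (2 * r + 1) → ℂ) :
    (conv3dJacobian n p q r m L)ᴴ = -(conv3dJacobian n p q r m L) ↔
      ∃ M : Fin m → Fin m → Fin (2 * p + 1) → Fin (2 * q + 1) → Fin (2 * r + 1) → ℂ,
        L = fun a b s t u => M a b s t u - conj (M b a s.rev t.rev u.rev) :=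
  conv3dJacobian_skewHermitian_iff_general n p q r m hp hq hr L
end
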